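/- arXiv:1410.2489 — 8 statements merged into one kernel-verified Lean document; each statement's English description precedes it below -/
import Mathlib

section
/- For every positive integer n, there exists a positive integer m ≤ 2n such that n divides the m-th Fibonacci number. -/
/-!
For a prime `p ≠ 2, 5` the Frobenius of a field of characteristic `p` fixes or swaps the roots
`α`, `1 - α` of `X ^ 2 - X - 1`, so Binet's formula gives `p ∣ fib (p - 1)` or `p ∣ fib (p + 1)`;
moreover `5 ∣ fib 5` and `2 ∣ fib 3`. The congruence
`fib (a * m) ≡ a * fib m * fib (m + 1) ^ (a - 1) [MOD fib m ^ 2]` lifts `p ∣ fib m` to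
`p ^ (k + 1) ∣ fib (p ^ k * m)`. As `fib` is a divisibility sequence, the lcm of indices for
coprime factors is an index for their product. Odd prime powers other than powers of `5` get even
indices of size at most `4/3` of the modulus, and the lcm of two even indices is at most half their
product; this keeps the index for the odd part of `n` at most `4/3` of it, and the extra factor
`3 * 2 ^ (a - 1)` coming from `2 ^ a` then stays within `2 * n`.
-/

open Nat

theorem sub_mul_fib_eq_pow_sub_pow {R : Type*} [CommRing R] {α β : R} (hsum : α + β = 1)
    (hprod : α * β = -1) (k : ℕ) : (α - β) * (fib k : R) = α ^ k - β ^ k := by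
  induction k using Nat.twoStepInduction with
  | zero => simp
  | one => simp
  | more k ih₀ ih₁ =>
    have hα : α ^ 2 = α + 1 := by linear_combination α * hsum - hprod
    have hβ : β ^ 2 = β + 1 := by linear_combination β * hsum - hprod
    rw [fib_add_two, cast_add, mul_add, ih₀, ih₁]
    linear_combination (-α ^ k) * hα + β ^ k * hβ

theorem cast_fib_sub_one_eq_zero_or_cast_fib_add_one_eq_zero {K : Type*} [Field K] (p : ℕ)
    [Fact p.Prime] [CharP K p] (h5 : (5 : K) ≠ 0) {α : K} (hα : α ^ 2 = α + 1) :
    (fib (p - 1) : K) = 0 ∨ (fib (p + 1) : K) = 0 := by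
  set β := 1 - α with hβ
  have hsum : α + β = 1 := by ring
  have hprod : α * β = -1 := by linear_combination -hα
  have hsub : α - β ≠ 0 := fun h ↦ h5 (by linear_combination (α - β) * h - 4 * hα)
  have hα₀ : α ≠ 0 := left_ne_zero_of_mul (hprod ▸ neg_ne_zero.mpr one_ne_zero)
  have hβ₀ : β ≠ 0 := right_ne_zero_of_mul (hprod ▸ neg_ne_zero.mpr one_ne_zero)
  have hβp : β ^ p = 1 - α ^ p := by rw [hβ, sub_pow_char, one_pow]
  -- Frobenius permutes the two roots `α`, `β` of `X ^ 2 - X - 1`.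
  have hfrob : (α ^ p - α) * (α ^ p - β) = 0 := by
    have : (α ^ p) ^ 2 = α ^ p + 1 := by
      rw [← pow_mul, mul_comm, pow_mul, hα, add_pow_char, one_pow]
    linear_combination this - α ^ p * hsum + hprod
  rcases mul_eq_zero.mp hfrob with h | h
  · left
    have hαp : α ^ p = α := sub_eq_zero.mp h
    have hα1 : α ^ (p - 1) = 1 := by
      rw [pow_sub₀ α hα₀ (Fact.out : p.Prime).one_le, pow_one, hαp, mul_inv_cancel₀ hα₀]
    have hβ1 : β ^ (p - 1) = 1 := by
      rw [pow_sub₀ β hβ₀ (Fact.out : p.Prime).one_le, pow_one, hβp, hαp, mul_inv_cancel₀ hβ₀]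
    have := sub_mul_fib_eq_pow_sub_pow hsum hprod (p - 1)
    rw [hα1, hβ1, sub_self] at this
    exact (mul_eq_zero.mp this).resolve_left hsub
  · right
    have hαp : α ^ p = β := sub_eq_zero.mp h
    have hβp' : β ^ p = α := by rw [hβp, hαp, hβ, sub_sub_cancel]
    have := sub_mul_fib_eq_pow_sub_pow hsum hprod (p + 1)
    rw [pow_succ, pow_succ, hαp, hβp', mul_comm β α, sub_self] at this
    exact (mul_eq_zero.mp this).resolve_left hsub

open Polynomial in
theorem Nat.Prime.dvd_fib_sub_one_or_dvd_fib_add_one {p : ℕ} (hp : p.Prime) (hp5 : p ≠ 5) :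
    p ∣ fib (p - 1) ∨ p ∣ fib (p + 1) := by
  have := Fact.mk hp
  let K := AlgebraicClosure (ZMod p)
  have hdeg : (X ^ 2 - X - 1 : K[X]).degree = 2 := by compute_degree!
  obtain ⟨α, hα⟩ := IsAlgClosed.exists_root (X ^ 2 - X - 1 : K[X]) (by rw [hdeg]; decide)
  have h5 : (5 : K) ≠ 0 := by
    rw [← Nat.cast_ofNat, Ne, CharP.cast_eq_zero_iff K p]
    exact fun h ↦ hp5 ((Nat.prime_dvd_prime_iff_eq hp (by norm_num)).mp h)
  simp only [← CharP.cast_eq_zero_iff K p]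
  refine cast_fib_sub_one_eq_zero_or_cast_fib_add_one_eq_zero p h5 (α := α) ?_
  simp only [IsRoot, eval_sub, eval_pow, eval_X, eval_one] at hα
  linear_combination hα

theorem cast_fib_mul_of_sq_eq_zero {R : Type*} [CommRing R] {m : ℕ} (h : (fib m : R) ^ 2 = 0)
    (j : ℕ) : (fib ((j + 1) * m) : R) = (j + 1) * fib m * fib (m + 1) ^ j ∧
      (fib ((j + 1) * m + 1) : R) = fib (m + 1) ^ (j + 1) := by
  obtain _ | n := m
  · simp
  have hrec : (fib n : R) = fib (n + 2) - fib (n + 1) := by rw [fib_add_two, cast_add]; ring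
  induction j with
  | zero => simp
  | succ j ih =>
    obtain ⟨ih₀, ih₁⟩ := ih
    have e₀ := fib_add ((j + 1) * (n + 1)) n
    have e₁ := fib_add ((j + 1) * (n + 1)) (n + 1)
    rw [show (j + 1) * (n + 1) + n + 1 = (j + 1 + 1) * (n + 1) by ring] at e₀
    rw [show (j + 1) * (n + 1) + (n + 1) + 1 = (j + 1 + 1) * (n + 1) + 1 by ring] at e₁
    constructor
    · rw [e₀]; push_cast; rw [ih₀, ih₁, hrec]
      linear_combination (-(j + 1) * (fib (n + 2) : R) ^ j) * h
    · rw [e₁]; push_cast; rw [ih₀, ih₁]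
      linear_combination ((j + 1) * (fib (n + 2) : R) ^ j) * h

theorem mul_fib_dvd_fib_mul {a m : ℕ} (h : a ∣ fib m) : a * fib m ∣ fib (a * m) := by
  obtain _ | j := a
  · simp
  -- Modulo `a * fib m` the square of `fib m` vanishes, and so does `fib (a * m) ≡ a * fib m * _`.
  have hsq : (fib m : ZMod ((j + 1) * fib m)) ^ 2 = 0 := by
    rw [← cast_pow, ZMod.natCast_eq_zero_iff, sq]
    exact mul_dvd_mul_right h _
  rw [← ZMod.natCast_eq_zero_iff, (cast_fib_mul_of_sq_eq_zero hsq j).1]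
  have hself := ZMod.natCast_self ((j + 1) * fib m)
  push_cast at hself
  rw [hself, zero_mul]

theorem pow_succ_dvd_fib_pow_mul {p m : ℕ} (h : p ∣ fib m) (k : ℕ) :
    p ^ (k + 1) ∣ fib (p ^ k * m) := by
  induction k with
  | zero => simpa using h
  | succ k ih =>
    rw [pow_succ' p (k + 1), show p ^ (k + 1) * m = p * (p ^ k * m) by ring]
    exact (mul_dvd_mul_left p ih).trans
      (mul_fib_dvd_fib_mul ((dvd_pow_self p k.succ_ne_zero).trans ih))

theorem Nat.Coprime.mul_dvd_fib_lcm {a b m₁ m₂ : ℕ} (hab : a.Coprime b) (h₁ : a ∣ fib m₁)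
    (h₂ : b ∣ fib m₂) : a * b ∣ fib (m₁.lcm m₂) :=
  hab.mul_dvd_of_dvd_of_dvd (h₁.trans (fib_dvd _ _ (dvd_lcm_left _ _)))
    (h₂.trans (fib_dvd _ _ (dvd_lcm_right _ _)))

/-- Even indices may exceed `n` because the lcm of two even indices saves a factor `2`. -/
def SmallFibIndex (n m : ℕ) : Prop :=
  0 < m ∧ n ∣ fib m ∧ (m ≤ n ∨ Even m ∧ 3 * m ≤ 4 * n)

theorem SmallFibIndex.three_mul_le {n m : ℕ} (h : SmallFibIndex n m) : 3 * m ≤ 4 * n := by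
  rcases h.2.2 with h | h <;> omega

theorem two_mul_lcm_le_mul {a b : ℕ} (ha : 0 < a) (h2a : 2 ∣ a) (h2b : 2 ∣ b) :
    2 * a.lcm b ≤ a * b := by
  rw [← Nat.gcd_mul_lcm a b]
  exact Nat.mul_le_mul_right _ (le_of_dvd (gcd_pos_of_pos_left b ha) (Nat.dvd_gcd h2a h2b))

theorem SmallFibIndex.lcm {a b m₁ m₂ : ℕ} (hab : a.Coprime b) (h₁ : SmallFibIndex a m₁)
    (h₂ : SmallFibIndex b m₂) : SmallFibIndex (a * b) (m₁.lcm m₂) := by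
  obtain ⟨hm₁, hd₁, hs₁⟩ := h₁
  obtain ⟨hm₂, hd₂, hs₂⟩ := h₂
  refine ⟨lcm_pos hm₁ hm₂, hab.mul_dvd_fib_lcm hd₁ hd₂, ?_⟩
  have hle : m₁.lcm m₂ ≤ m₁ * m₂ := le_of_dvd (by positivity) (Nat.lcm_dvd_mul m₁ m₂)
  rcases hs₁ with hs₁ | ⟨he₁, hs₁⟩ <;> rcases hs₂ with hs₂ | ⟨he₂, hs₂⟩
  · exact .inl (hle.trans (Nat.mul_le_mul hs₁ hs₂))
  · exact .inr ⟨he₂.trans_dvd (Nat.dvd_lcm_right _ _), by nlinarith⟩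
  · exact .inr ⟨he₁.trans_dvd (Nat.dvd_lcm_left _ _), by nlinarith⟩
  · have := two_mul_lcm_le_mul hm₁ he₁.two_dvd he₂.two_dvd
    exact .inr ⟨he₁.trans_dvd (Nat.dvd_lcm_left _ _), by nlinarith⟩

theorem exists_smallFibIndex_prime_pow {p k : ℕ} (hp : p.Prime) (hp2 : p ≠ 2) (hk : k ≠ 0) :
    ∃ m, SmallFibIndex (p ^ k) m := by
  obtain ⟨k, rfl⟩ := exists_eq_add_one_of_ne_zero hk
  by_cases hp5 : p = 5
  · subst hp5
    have h5 : 5 ^ (k + 1) ∣ fib (5 ^ k * 5) := pow_succ_dvd_fib_pow_mul (by decide) k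
    exact ⟨5 ^ (k + 1), by positivity, by rwa [← pow_succ] at h5, .inl le_rfl⟩
  obtain ⟨t, hpt, ht, hte, ht4⟩ : ∃ t, p ∣ fib t ∧ 0 < t ∧ Even t ∧ 3 * t ≤ 4 * p := by
    have hodd := hp.odd_of_ne_two hp2
    have hp3 : 3 ≤ p := by have := hp.two_le; omega
    rcases hp.dvd_fib_sub_one_or_dvd_fib_add_one hp5 with h | h
    · exact ⟨p - 1, h, by omega, Nat.Odd.sub_odd hodd odd_one, by omega⟩
    · exact ⟨p + 1, h, by omega, hodd.add_one, by omega⟩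
  refine ⟨p ^ k * t, Nat.mul_pos (pow_pos hp.pos k) ht, pow_succ_dvd_fib_pow_mul hpt k,
    .inr ⟨hte.mul_left _, ?_⟩⟩
  calc 3 * (p ^ k * t) = p ^ k * (3 * t) := by ring
    _ ≤ p ^ k * (4 * p) := by gcongr
    _ = 4 * p ^ (k + 1) := by ring

theorem exists_smallFibIndex_of_odd {n : ℕ} (hn : Odd n) : ∃ m, SmallFibIndex n m := by
  induction n using recOnPosPrimePosCoprime with
  | prime_pow p k hp hk =>
    refine exists_smallFibIndex_prime_pow hp ?_ hk.ne'
    rintro rfl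
    exact (not_odd_iff_even.mpr (even_pow.mpr ⟨even_two, hk.ne'⟩)) hn
  | zero => exact absurd hn (by decide)
  | one => exact ⟨1, one_pos, one_dvd _, .inl le_rfl⟩
  | coprime a b _ _ hab iha ihb =>
    obtain ⟨ha, hb⟩ := odd_mul.mp hn
    obtain ⟨m₁, h₁⟩ := iha ha
    obtain ⟨m₂, h₂⟩ := ihb hb
    exact ⟨_, h₁.lcm hab h₂⟩

theorem fib_entry_le_two_mul (n : ℕ) (hn : 0 < n) :
    ∃ m : ℕ, 0 < m ∧ m ≤ 2 * n ∧ n ∣ Nat.fib m := by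
  obtain ⟨a, n, hodd, rfl⟩ := exists_eq_two_pow_mul_odd hn.ne'
  obtain ⟨m, hm⟩ := exists_smallFibIndex_of_odd hodd
  have h3 := hm.three_mul_le
  obtain ⟨hm, hdvd, -⟩ := hm
  obtain _ | b := a
  · exact ⟨m, hm, by omega, by simpa using hdvd⟩
  have h2 : 2 ^ (b + 1) ∣ fib (2 ^ b * 3) := pow_succ_dvd_fib_pow_mul (by decide) b
  have hcop : (2 ^ (b + 1)).Coprime n := (coprime_two_left.mpr hodd).pow_left _
  refine ⟨(2 ^ b * 3).lcm m, lcm_pos (by positivity) hm, ?_, hcop.mul_dvd_fib_lcm h2 hdvd⟩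
  calc (2 ^ b * 3).lcm m ≤ 2 ^ b * 3 * m := le_of_dvd (by positivity) (Nat.lcm_dvd_mul _ _)
    _ ≤ 2 ^ b * (4 * n) := by rw [mul_assoc]; gcongr
    _ = 2 * (2 ^ (b + 1) * n) := by ring
end

section
/- If a prime p ≠ 5 and z(p) is the least positive integer m with p | F_m, then z(p) divides p - (p/5), where (p/5) is the Legendre symbol of p modulo 5. -/
/-- The Fibonacci entry point: least positive `m` with `n ∣ Nat.fib m`. -/
noncomputable def fibEntry (n : ℕ) : ℕ := sInf {m | 0 < m ∧ n ∣ Nat.fib m}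
instance : Fact (Nat.Prime 5) := ⟨by norm_num⟩

open Polynomial

/-- Binet-style identity in any commutative ring. -/
lemma fib_binet {R : Type*} [CommRing R] (α β : R) (hs : α + β = 1) (hm : α * β = -1) :
    ∀ n : ℕ, (Nat.fib n : R) * (α - β) = α ^ n - β ^ n := by
  have hα : α ^ 2 = α + 1 := by
    linear_combination α * hs - hm
  have hβ : β ^ 2 = β + 1 := by
    linear_combination β * hs - hm
  intro n
  induction n using Nat.twoStepInduction with
  | zero => simp
  | one => simp
  | more n ih1 ih2 =>
    rw [Nat.fib_add_two]
    push_cast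
    have e1 : α ^ (n + 2) = α ^ (n + 1) + α ^ n := by
      have h : α ^ (n + 2) = α ^ n * α ^ 2 := by ring
      rw [h, hα]; ring
    have e2 : β ^ (n + 2) = β ^ (n + 1) + β ^ n := by
      have h : β ^ (n + 2) = β ^ n * β ^ 2 := by ring
      rw [h, hβ]; ring
    rw [e1, e2, add_mul, ih1, ih2]; ring

/-- The entry point divides every index of a Fibonacci multiple. -/
lemma fibEntry_dvd {p m : ℕ} (hm : 0 < m) (hdvd : p ∣ Nat.fib m) : fibEntry p ∣ m := by
  have hne : {k | 0 < k ∧ p ∣ Nat.fib k}.Nonempty := ⟨m, hm, hdvd⟩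
  obtain ⟨hz0, hzd⟩ := Nat.sInf_mem hne
  set z := sInf {k | 0 < k ∧ p ∣ Nat.fib k} with hzdef
  have hg : p ∣ Nat.fib (Nat.gcd z m) := by
    rw [Nat.fib_gcd]; exact Nat.dvd_gcd hzd hdvd
  have hg0 : 0 < Nat.gcd z m := Nat.gcd_pos_of_pos_left _ hz0
  have hle : z ≤ Nat.gcd z m := Nat.sInf_le ⟨hg0, hg⟩
  have hdl : Nat.gcd z m ∣ z := Nat.gcd_dvd_left z m
  have heq : Nat.gcd z m = z := le_antisymm (Nat.le_of_dvd hz0 hdl) hle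
  have hzm : z ∣ m := heq ▸ Nat.gcd_dvd_right z m
  simpa [fibEntry, ← hzdef] using hzm

lemma five_ne_zero_zmod (p : ℕ) [Fact p.Prime] (hp5 : p ≠ 5) : (5 : ZMod p) ≠ 0 := by
  have h : ((5 : ℕ) : ZMod p) ≠ 0 := by
    rw [Ne, ZMod.natCast_eq_zero_iff]
    intro h
    exact hp5 ((Nat.prime_dvd_prime_iff_eq (Fact.out) (by norm_num)).mp h)
  simpa using h

/-- Case `(5/p) = 1`: `p ∣ fib (p-1)`. -/
lemma prime_dvd_fib_sub_one (p : ℕ) [hp : Fact p.Prime] (hp2 : p ≠ 2) (hp5 : p ≠ 5)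
    (hsq : IsSquare (5 : ZMod p)) : p ∣ Nat.fib (p - 1) := by
  obtain ⟨r, hr⟩ := hsq
  have h5 : (5 : ZMod p) ≠ 0 := five_ne_zero_zmod p hp5
  have hr0 : r ≠ 0 := by rintro rfl; simp at hr; exact h5 hr
  have h2 : (2 : ZMod p) ≠ 0 := by
    have h : ((2 : ℕ) : ZMod p) ≠ 0 := by
      rw [Ne, ZMod.natCast_eq_zero_iff]
      intro h
      exact hp2 ((Nat.prime_dvd_prime_iff_eq (Fact.out) (by norm_num)).mp h)
    simpa using h
  set α : ZMod p := (1 + r) / 2 with hαd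
  set β : ZMod p := (1 - r) / 2 with hβd
  have hs : α + β = 1 := by rw [hαd, hβd]; field_simp; ring
  have hm : α * β = -1 := by
    rw [hαd, hβd]; field_simp
    linear_combination hr
  have hd : α - β = r := by rw [hαd, hβd]; field_simp; ring
  have hα0 : α ≠ 0 := by
    intro h; rw [h, zero_mul] at hm
    exact one_ne_zero (neg_eq_zero.mp hm.symm)
  have hβ0 : β ≠ 0 := by
    intro h; rw [h, mul_zero] at hm
    exact one_ne_zero (neg_eq_zero.mp hm.symm)
  have key := fib_binet α β hs hm (p - 1)
  rw [hd, ZMod.pow_card_sub_one_eq_one hα0, ZMod.pow_card_sub_one_eq_one hβ0, sub_self] at key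
  have hz : (Nat.fib (p - 1) : ZMod p) = 0 := by
    rcases mul_eq_zero.mp key with h | h
    · exact h
    · exact absurd h hr0
  exact (ZMod.natCast_eq_zero_iff _ _).mp hz

/-- Frobenius computation in an abstract field of characteristic `p`. -/
lemma fib_add_one_eq_zero {K : Type*} [Field K] {p : ℕ} [Fact p.Prime] [CharP K p]
    (hp2 : p ≠ 2) {r : K} (hr2 : r ^ 2 = 5) (hr0 : r ≠ 0) (hrp : r ^ p = -r) :
    ((Nat.fib (p + 1) : ℕ) : K) = 0 := by
  have h2 : (2 : K) ≠ 0 := by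
    have h : ((2 : ℕ) : K) ≠ 0 := by
      rw [Ne, CharP.cast_eq_zero_iff K p]
      intro h
      exact hp2 ((Nat.prime_dvd_prime_iff_eq (Fact.out) (by norm_num)).mp h)
    simpa using h
  have h2p : (2 : K) ^ p = 2 := by
    rw [show (2 : K) = 1 + 1 by norm_num, add_pow_char, one_pow]
  have hs : (1 + r) / 2 + (1 - r) / 2 = 1 := by field_simp; ring
  have hm : ((1 + r) / 2) * ((1 - r) / 2) = -1 := by
    field_simp
    linear_combination -hr2
  have hd : (1 + r) / 2 - (1 - r) / 2 = r := by field_simp; ring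
  have hfa : ((1 + r) / 2) ^ p = (1 - r) / 2 := by
    rw [div_pow, h2p]
    congr 1
    rw [add_pow_char, one_pow, hrp, sub_eq_add_neg]
  have hodd : Odd p := ⟨p / 2, by
    have := (Fact.out : p.Prime).eq_two_or_odd.resolve_left hp2; omega⟩
  have hfb : ((1 - r) / 2) ^ p = (1 + r) / 2 := by
    rw [div_pow, h2p]
    congr 1
    rw [sub_eq_add_neg, add_pow_char, one_pow, Odd.neg_pow hodd, hrp, neg_neg]
  have key := fib_binet _ _ hs hm (p + 1)
  rw [hd, pow_succ, pow_succ, hfa, hfb] at key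
  have hz : ((Nat.fib (p + 1) : ℕ) : K) * r = 0 := by rw [key]; ring
  rcases mul_eq_zero.mp hz with h | h
  · exact h
  · exact absurd h hr0

/-- Case `(5/p) = -1`: `p ∣ fib (p+1)` for odd `p`. -/
lemma prime_dvd_fib_add_one (p : ℕ) [hp : Fact p.Prime] (hp2 : p ≠ 2)
    (hnsq : ¬ IsSquare (5 : ZMod p)) (hleg : legendreSym p 5 = -1) :
    p ∣ Nat.fib (p + 1) := by
  have h5 : (5 : ZMod p) ≠ 0 := by
    intro h; exact hnsq ⟨0, by rw [h, mul_zero]⟩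
  have hirr : Irreducible (X ^ 2 - C (5 : ZMod p)) :=
    X_pow_sub_C_irreducible_of_prime Nat.prime_two
      (fun b hb => hnsq ⟨b, by rw [← hb]; ring⟩)
  haveI : Fact (Irreducible (X ^ 2 - C (5 : ZMod p))) := ⟨hirr⟩
  set K := AdjoinRoot (X ^ 2 - C (5 : ZMod p)) with hKd
  have hinj : Function.Injective (algebraMap (ZMod p) K) :=
    (algebraMap (ZMod p) K).injective
  haveI : CharP K p := charP_of_injective_algebraMap hinj p
  set r : K := AdjoinRoot.root (X ^ 2 - C (5 : ZMod p)) with hrdef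
  have hr2 : r ^ 2 = algebraMap (ZMod p) K 5 := root_X_pow_sub_C_pow 2 (5 : ZMod p)
  have h5K : algebraMap (ZMod p) K 5 = (5 : K) := map_ofNat _ 5
  have hr2' : r ^ 2 = (5 : K) := by rw [hr2, h5K]
  have h5K0 : (5 : K) ≠ 0 := by
    rw [← h5K]
    exact fun h => h5 (hinj (by rw [h, map_zero]))
  have hr0 : r ≠ 0 := by
    intro h; rw [h] at hr2'; simp at hr2'; exact h5K0 hr2'.symm
  have hodd : p % 2 = 1 := hp.out.eq_two_or_odd.resolve_left hp2
  have hpow : (5 : ZMod p) ^ (p / 2) = -1 := by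
    have h := legendreSym.eq_pow p 5
    rw [hleg] at h
    push_cast at h
    exact h.symm
  have hpowK : (5 : K) ^ (p / 2) = -1 := by
    rw [← h5K, ← map_pow, hpow, map_neg, map_one]
  have hE : p = 2 * (p / 2) + 1 := by omega
  have hrp : r ^ p = -r := by
    calc r ^ p = (r ^ 2) ^ (p / 2) * r := by rw [← pow_mul, ← pow_succ, ← hE]
      _ = -r := by rw [hr2', hpowK]; ring
  have hzK := fib_add_one_eq_zero hp2 hr2' hr0 hrp
  have hz : ((Nat.fib (p + 1) : ℕ) : ZMod p) = 0 := by
    apply hinj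
    rw [map_natCast, map_zero, hzK]
  exact (ZMod.natCast_eq_zero_iff _ _).mp hz

theorem fibEntry_dvd_sub_legendre (p : ℕ) (hp : p.Prime) (hp5 : p ≠ 5) :
    (fibEntry p : ℤ) ∣ (p : ℤ) - legendreSym 5 (p : ℤ) := by
  haveI : Fact p.Prime := ⟨hp⟩
  have hpz : ((p : ℤ) : ZMod 5) ≠ 0 := by
    rw [Ne, ZMod.intCast_zmod_eq_zero_iff_dvd]
    intro h
    have h' : (5 : ℕ) ∣ p := by exact_mod_cast h
    exact hp5 ((Nat.prime_dvd_prime_iff_eq (by norm_num) hp).mp h').symm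
  rcases legendreSym.eq_one_or_neg_one 5 hpz with hε | hε
  · -- Legendre symbol is 1
    have hp2 : p ≠ 2 := by
      rintro rfl
      have : legendreSym 5 ((2 : ℕ) : ℤ) = -1 := by decide
      rw [this] at hε; norm_num at hε
    have hrec : legendreSym p 5 = legendreSym 5 p :=
      legendreSym.quadratic_reciprocity_one_mod_four (by norm_num) hp2
    have h1 : legendreSym p 5 = 1 := by rw [hrec]; exact_mod_cast hε
    have hsq : IsSquare (5 : ZMod p) := by
      have h := (legendreSym.eq_one_iff p (a := 5)
        (by push_cast; exact five_ne_zero_zmod p hp5)).mp h1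
      simpa using h
    have hdv := fibEntry_dvd (m := p - 1) (by have := hp.two_le; omega)
      (prime_dvd_fib_sub_one p hp2 hp5 hsq)
    rw [hε]
    have hc : (p : ℤ) - 1 = ((p - 1 : ℕ) : ℤ) := by
      have := hp.two_le; push_cast [Nat.cast_sub (by omega : 1 ≤ p)]; ring
    rw [hc]
    exact_mod_cast hdv
  · rw [hε]
    have hc : (p : ℤ) - (-1) = ((p + 1 : ℕ) : ℤ) := by push_cast; ring
    rw [hc]
    have hdvd : p ∣ Nat.fib (p + 1) := by
      rcases eq_or_ne p 2 with rfl | hp2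
      · decide
      · have hrec : legendreSym p 5 = legendreSym 5 p :=
          legendreSym.quadratic_reciprocity_one_mod_four (by norm_num) hp2
        have h1 : legendreSym p 5 = -1 := by rw [hrec]; exact_mod_cast hε
        have hnsq : ¬ IsSquare (5 : ZMod p) := by
          have h := (legendreSym.eq_neg_one_iff p (a := 5)).mp h1
          simpa using h
        exact prime_dvd_fib_add_one p hp2 hnsq h1
    exact_mod_cast fibEntry_dvd (by omega) hdvd
end

section
/- For all positive integers a and b, z(lcm(a,b)) = lcm(z(a), z(b)), where z is the Fibonacci entry point. -/
private lemma fib_zmod_step (n i : ℕ) :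
    ((Nat.fib i : ZMod n)) = (Nat.fib (i + 2) : ZMod n) - Nat.fib (i + 1) := by
  have h := Nat.fib_add_two (n := i)
  have : (Nat.fib (i + 2) : ZMod n) = Nat.fib i + Nat.fib (i + 1) := by
    rw [h]; push_cast; ring
  rw [this]; ring

private lemma fib_shift (n d : ℕ) : ∀ i : ℕ,
    ((Nat.fib i : ZMod n) = Nat.fib (i + d) ∧
      (Nat.fib (i + 1) : ZMod n) = Nat.fib (i + 1 + d)) →
    ((Nat.fib 0 : ZMod n) = Nat.fib d ∧ (Nat.fib 1 : ZMod n) = Nat.fib (1 + d)) := by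
  intro i
  induction i with
  | zero => intro h; simpa using h
  | succ i ih =>
    rintro ⟨h1, h2⟩
    apply ih
    constructor
    · rw [fib_zmod_step n i, fib_zmod_step n (i + d)]
      have e1 : i + d + 2 = i + 1 + 1 + d := by ring
      have e2 : i + d + 1 = i + 1 + d := by ring
      rw [e1, e2, ← h1]
      have e3 : i + 1 + 1 = i + 2 := by ring
      rw [← e3, ← h2]
    · exact h1

private lemma exists_fib_dvd (n : ℕ) (hn : 0 < n) : ∃ m, 0 < m ∧ n ∣ Nat.fib m := by
  haveI : NeZero n := ⟨hn.ne'⟩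
  obtain ⟨i, j, hne, heq⟩ := Finite.exists_ne_map_eq_of_infinite
    (fun k : ℕ => ((Nat.fib k : ZMod n), (Nat.fib (k + 1) : ZMod n)))
  wlog hij : i < j generalizing i j
  · exact this j i hne.symm heq.symm (by omega)
  set d := j - i with hd
  have hdpos : 0 < d := by omega
  have hji : j = i + d := by omega
  have key := fib_shift n d i ⟨by rw [← hji]; exact congrArg Prod.fst heq,
    by
      have : (Nat.fib (i + 1) : ZMod n) = Nat.fib (j + 1) := congrArg Prod.snd heq
      rw [this, hji]; ring_nf⟩
  refine ⟨d, hdpos, ?_⟩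
  have h0 : (Nat.fib d : ZMod n) = 0 := by
    have := key.1
    simpa using this.symm
  exact (ZMod.natCast_eq_zero_iff _ _).mp h0

private lemma fibEntry_spec (n : ℕ) (hn : 0 < n) :
    0 < fibEntry n ∧ n ∣ Nat.fib (fibEntry n) :=
  Nat.sInf_mem (exists_fib_dvd n hn)

private lemma dvd_fib_iff (n : ℕ) (hn : 0 < n) (m : ℕ) :
    n ∣ Nat.fib m ↔ fibEntry n ∣ m := by
  obtain ⟨hz, hdvd⟩ := fibEntry_spec n hn
  constructor
  · intro h
    rcases Nat.eq_zero_or_pos m with rfl | hm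
    · exact dvd_zero _
    · have hg : n ∣ Nat.fib (Nat.gcd (fibEntry n) m) := by
        rw [Nat.fib_gcd]; exact Nat.dvd_gcd hdvd h
      have hgpos : 0 < Nat.gcd (fibEntry n) m := Nat.gcd_pos_of_pos_right _ hm
      have hle : fibEntry n ≤ Nat.gcd (fibEntry n) m :=
        Nat.sInf_le ⟨hgpos, hg⟩
      have hge : Nat.gcd (fibEntry n) m ≤ fibEntry n := Nat.gcd_le_left _ hz
      have : Nat.gcd (fibEntry n) m = fibEntry n := le_antisymm hge hle
      rw [← this]; exact Nat.gcd_dvd_right _ _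
  · intro h
    exact dvd_trans hdvd (Nat.fib_dvd _ _ h)

theorem fibEntry_lcm (a b : ℕ) (ha : 0 < a) (hb : 0 < b) :
    fibEntry (Nat.lcm a b) = Nat.lcm (fibEntry a) (fibEntry b) := by
  have hl : 0 < Nat.lcm a b := Nat.pos_of_ne_zero (Nat.lcm_ne_zero ha.ne' hb.ne')
  have key : ∀ m : ℕ, fibEntry (Nat.lcm a b) ∣ m ↔ Nat.lcm (fibEntry a) (fibEntry b) ∣ m := by
    intro m
    rw [← dvd_fib_iff _ hl, Nat.lcm_dvd_iff, Nat.lcm_dvd_iff,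
      dvd_fib_iff a ha, dvd_fib_iff b hb]
  exact Nat.dvd_antisymm ((key _).mpr dvd_rfl) ((key _).mp dvd_rfl)
end

section
/- For every positive integer n, the 5-adic valuation of the n-th Fibonacci number equals the 5-adic valuation of n: v_5(F_n) = v_5(n). -/
open Nat

lemma cassiniZ (n : ℕ) : ((fib (n+1)):ℤ)^2 = (fib n) * (fib (n+1)) + (fib n)^2 + (-1)^n := by
  induction n with
  | zero => norm_num
  | succ k ih =>
    rw [show k+1+1 = k+2 by omega, Nat.fib_add_two]
    push_cast
    linear_combination -ih

lemma fib5Z (n : ℕ) : (fib (5*n) : ℤ) =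
    25*(fib n:ℤ)^5 + 25*(-1)^n*(fib n:ℤ)^3 + 5*(fib n:ℤ) := by
  set a : ℤ := (fib n : ℤ) with ha
  set b : ℤ := (fib (n+1) : ℤ) with hb
  have hn2 : (fib (n+2):ℤ) = a + b := by rw [Nat.fib_add_two]; push_cast; ring
  have h1 : (fib (2*n+1):ℤ) = a^2 + b^2 := by
    have h := Nat.fib_add n n
    rw [show n+n+1 = 2*n+1 by omega] at h
    rw [h]; push_cast; ring
  have h2 : (fib (2*n+2):ℤ) = 2*a*b + b^2 := by
    have h := Nat.fib_add n (n+1)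
    rw [show n+(n+1)+1 = 2*n+2 by omega] at h
    rw [h]; push_cast [show n+1+1 = n+2 by omega]
    rw [hn2]; ring
  have h0 : (fib (2*n):ℤ) = 2*a*b - a^2 := by
    have h : (fib (2*n+2):ℤ) = (fib (2*n):ℤ) + (fib (2*n+1):ℤ) := by
      exact_mod_cast congrArg (Nat.cast : ℕ → ℤ) (Nat.fib_add_two (n := 2*n))
    linear_combination h2 - h1 - h
  have h41 : (fib (4*n+1):ℤ) = (2*a*b - a^2)^2 + (a^2+b^2)^2 := by
    have h := Nat.fib_add (2*n) (2*n)
    rw [show 2*n+2*n+1 = 4*n+1 by omega] at h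
    rw [h]; push_cast; rw [h0, h1]; ring
  have h42 : (fib (4*n+2):ℤ) = (2*a*b - a^2)*(a^2+b^2) + (a^2+b^2)*(2*a*b + b^2) := by
    have h := Nat.fib_add (2*n) (2*n+1)
    rw [show 2*n+(2*n+1)+1 = 4*n+2 by omega] at h
    rw [h]; push_cast [show 2*n+1+1 = 2*n+2 by omega]
    rw [h0, h1, h2]; try ring
  have h40 : (fib (4*n):ℤ) =
      (2*a*b - a^2)*(a^2+b^2) + (a^2+b^2)*(2*a*b + b^2) - ((2*a*b - a^2)^2 + (a^2+b^2)^2) := by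
    have h : (fib (4*n+2):ℤ) = (fib (4*n):ℤ) + (fib (4*n+1):ℤ) := by
      exact_mod_cast congrArg (Nat.cast : ℕ → ℤ) (Nat.fib_add_two (n := 4*n))
    linear_combination h42 - h41 - h
  have h51 : (fib (5*n+1):ℤ) = (fib (4*n):ℤ)*a + (fib (4*n+1):ℤ)*b := by
    have h := Nat.fib_add (4*n) n
    rw [show 4*n+n+1 = 5*n+1 by omega] at h
    rw [h]; push_cast [show 4*n+1 = 4*n+1 by omega]; ring
  have h52 : (fib (5*n+2):ℤ) = (fib (4*n+1):ℤ)*a + (fib (4*n+2):ℤ)*b := by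
    have h := Nat.fib_add (4*n+1) n
    rw [show 4*n+1+n+1 = 5*n+2 by omega] at h
    rw [h]; push_cast [show 4*n+1+1 = 4*n+2 by omega]; ring
  have h : (fib (5*n+2):ℤ) = (fib (5*n):ℤ) + (fib (5*n+1):ℤ) := by
    exact_mod_cast congrArg (Nat.cast : ℕ → ℤ) (Nat.fib_add_two (n := 5*n))
  have hC : b^2 = a*b + a^2 + (-1:ℤ)^n := cassiniZ n
  have hE : ((-1:ℤ)^n)^2 = 1 := by
    rw [← pow_mul, mul_comm, pow_mul]; norm_num
  have h5n : (fib (5*n):ℤ) = (fib (5*n+2):ℤ) - (fib (5*n+1):ℤ) := by linarith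
  rw [h5n, h52, h51, h40, h41, h42]
  linear_combination (20*a^3 + 5*a*b^2 - 5*a^2*b + 5*a*(-1:ℤ)^n) * hC + 5*a*hE

lemma step5 (n : ℕ) (hn : 0 < n) :
    padicValNat 5 (fib (5*n)) = padicValNat 5 (fib n) + 1 := by
  haveI : Fact (Nat.Prime 5) := ⟨by norm_num⟩
  set a : ℤ := (fib n : ℤ) with ha
  have hapos : 0 < a := by rw [ha]; exact_mod_cast Nat.fib_pos.mpr hn
  set c : ℤ := 25*a^4 + 25*(-1)^n*a^2 + 5 with hc
  have he : (-1:ℤ)^n = 1 ∨ (-1:ℤ)^n = -1 := by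
    rcases Nat.even_or_odd n with h | h
    · exact Or.inl (Even.neg_one_pow h)
    · exact Or.inr (Odd.neg_one_pow h)
  have hcpos : 0 < c := by
    rcases he with h | h <;> rw [hc, h] <;> nlinarith [sq_nonneg a, sq_nonneg (a^2 - 1)]
  set k : ℕ := c.toNat with hk
  have hkc : (k:ℤ) = c := Int.toNat_of_nonneg hcpos.le
  have hfib : fib (5*n) = fib n * k := by
    have : (fib (5*n) : ℤ) = ((fib n * k : ℕ) : ℤ) := by
      push_cast
      rw [hkc, fib5Z n, hc]; ring
    exact_mod_cast this
  have hk5 : 5 ∣ k := by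
    have : (5:ℤ) ∣ (k:ℤ) := by
      rw [hkc, hc]; exact ⟨5*a^4 + 5*(-1)^n*a^2 + 1, by ring⟩
    exact_mod_cast this
  have hk25 : ¬ (25 ∣ k) := by
    intro h
    have h' : (25:ℤ) ∣ (k:ℤ) := by exact_mod_cast h
    rw [hkc, hc] at h'
    obtain ⟨t, ht⟩ := h'
    have : (25:ℤ) ∣ 5 := ⟨t - a^4 - (-1)^n*a^2, by linear_combination ht⟩
    norm_num at this
  have hk0 : k ≠ 0 := by intro h; omega
  have hvk : padicValNat 5 k = 1 := by
    have h1 : 1 ≤ padicValNat 5 k := by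
      rw [← padicValNat_dvd_iff_le hk0]; simpa using hk5
    have h2 : ¬ 2 ≤ padicValNat 5 k := by
      rw [← padicValNat_dvd_iff_le hk0]; norm_num; exact hk25
    omega
  rw [hfib, padicValNat.mul (Nat.fib_pos.mpr hn).ne' hk0, hvk]

theorem padicValNat_five_fib (n : ℕ) (hn : 0 < n) :
    padicValNat 5 (Nat.fib n) = padicValNat 5 n := by
  haveI : Fact (Nat.Prime 5) := ⟨by norm_num⟩
  induction n using Nat.strong_induction_on with
  | _ n ih =>
    by_cases h5 : 5 ∣ n
    · obtain ⟨m, rfl⟩ := h5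
      have hm : 0 < m := by omega
      rw [step5 m hm, ih m (by omega) hm,
        padicValNat.mul (by norm_num) hm.ne', padicValNat.self (by norm_num)]
      omega
    · have hg : Nat.gcd 5 n = 1 := (Nat.Prime.coprime_iff_not_dvd (by norm_num)).mpr h5
      have hnd : ¬ 5 ∣ fib n := by
        intro h
        have h1 : 5 ∣ Nat.gcd (fib 5) (fib n) := Nat.dvd_gcd (by norm_num) h
        rw [← Nat.fib_gcd, hg] at h1
        norm_num at h1
      rw [padicValNat.eq_zero_of_not_dvd hnd, padicValNat.eq_zero_of_not_dvd h5]
end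

section
/- For every positive integer n: v_2(F_n) = 0 if n ≡ 1 or 2 (mod 3); v_2(F_n) = 1 if n ≡ 3 (mod 6); v_2(F_n) = 3 if n ≡ 6 (mod 12); and v_2(F_n) = v_2(n) + 2 if n ≡ 0 (mod 12). -/
/-!
Modulo `2^k` the Fibonacci sequence is periodic, so `F_n mod 16` depends only on `n mod 24`; this
settles every `n ≢ 0 (mod 12)`. For `6 ∣ m` the doubling formula `F_{2m} = F_m L_m`, where the
Lucas number `L_m = 2F_{m+1} - F_m` is `≡ 2 (mod 4)` because `4 ∣ F_m` and `F_{m+1}` is odd,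
gives `v₂(F_{2m}) = v₂(F_m) + 1`; halving `n` down to `n ≡ 6 (mod 12)` finishes the proof.
-/

namespace Nat

theorem fib_add_modEq_of_modEq {m p : ℕ} (h0 : fib p ≡ 0 [MOD m])
    (h1 : fib (p + 1) ≡ 1 [MOD m]) (n : ℕ) : fib (p + n) ≡ fib n [MOD m] := by
  cases n with
  | zero => exact h0
  | succ k =>
    rw [← add_assoc, fib_add]
    simpa using (h0.mul_right (fib k)).add (h1.mul_right (fib (k + 1)))

theorem fib_modEq_fib_mod {m p : ℕ} (h0 : fib p ≡ 0 [MOD m]) (h1 : fib (p + 1) ≡ 1 [MOD m])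
    (n : ℕ) : fib n ≡ fib (n % p) [MOD m] := by
  suffices ∀ q r, fib (p * q + r) ≡ fib r [MOD m] by
    simpa only [div_add_mod] using this (n / p) (n % p)
  intro q r
  induction q with
  | zero => rw [mul_zero, zero_add]
  | succ q ih =>
    rw [mul_add_one, add_right_comm, add_comm]
    exact (fib_add_modEq_of_modEq h0 h1 _).trans ih

end Nat

theorem padicValNat_eq_of_dvd_of_not_dvd {p k x : ℕ} (hp : p ≠ 1) (hk : p ^ k ∣ x)
    (hk' : ¬p ^ (k + 1) ∣ x) : padicValNat p x = k := by
  rw [padicValNat_dvd_iff_of_ne_one hp] at hk hk'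
  omega

open Nat

theorem fib_mod_two_of_mod_three_ne_zero {n : ℕ} (h : n % 3 ≠ 0) : fib n % 2 = 1 :=
  show fib n ≡ 1 [MOD 2] from (fib_modEq_fib_mod (p := 3) (by decide) (by decide) n).trans <| by
    rcases (by omega : n % 3 = 1 ∨ n % 3 = 2) with h | h <;> rw [h] <;> decide

theorem fib_mod_four_of_mod_six_eq_three {n : ℕ} (h : n % 6 = 3) : fib n % 4 = 2 :=
  show fib n ≡ 2 [MOD 4] from
    (fib_modEq_fib_mod (p := 6) (by decide) (by decide) n).trans (by rw [h]; decide)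

theorem fib_mod_four_of_six_dvd {n : ℕ} (h : 6 ∣ n) : fib n % 4 = 0 :=
  show fib n ≡ 0 [MOD 4] from
    (fib_modEq_fib_mod (p := 6) (by decide) (by decide) n).trans <| by
      rw [mod_eq_zero_of_dvd h]; decide

theorem fib_mod_sixteen_of_mod_twelve_eq_six {n : ℕ} (h : n % 12 = 6) : fib n % 16 = 8 :=
  show fib n ≡ 8 [MOD 16] from (fib_modEq_fib_mod (p := 24) (by decide) (by decide) n).trans <| by
    rcases (by omega : n % 24 = 6 ∨ n % 24 = 18) with h | h <;> rw [h] <;> decide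

theorem padicValNat_two_fib_two_mul {m : ℕ} (hm : 6 ∣ m) (hm0 : 0 < m) :
    padicValNat 2 (fib (2 * m)) = padicValNat 2 (fib m) + 1 := by
  have hfib : fib m % 4 = 0 := fib_mod_four_of_six_dvd hm
  have hfib' : fib (m + 1) % 2 = 1 := fib_mod_two_of_mod_three_ne_zero (by omega)
  have hle : fib m ≤ fib (m + 1) := fib_le_fib_succ
  have hlucas : padicValNat 2 (2 * fib (m + 1) - fib m) = 1 :=
    padicValNat_eq_of_dvd_of_not_dvd (by norm_num) (by omega) (by omega)
  rw [fib_two_mul, padicValNat.mul (fib_pos.mpr hm0).ne' (by omega), hlucas]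

theorem padicValNat_two_fib_of_six_dvd {n : ℕ} (h6 : 6 ∣ n) (hn : 0 < n) :
    padicValNat 2 (fib n) = padicValNat 2 n + 2 := by
  induction n using Nat.strong_induction_on with
  | _ n ih =>
    by_cases h12 : n % 12 = 6
    · have hfib := fib_mod_sixteen_of_mod_twelve_eq_six h12
      rw [padicValNat_eq_of_dvd_of_not_dvd (p := 2) (k := 3) (by norm_num) (by omega) (by omega),
        padicValNat_eq_of_dvd_of_not_dvd (p := 2) (k := 1) (by norm_num) (by omega) (by omega)]
    · obtain ⟨m, rfl⟩ : ∃ m, n = 2 * m := ⟨n / 2, by omega⟩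
      have hm : 6 ∣ m := by omega
      rw [padicValNat_two_fib_two_mul hm (by omega), ih m (by omega) hm (by omega),
        padicValNat.mul two_ne_zero (by omega), padicValNat.self one_lt_two]
      omega

theorem padicValNat_two_fib (n : ℕ) (hn : 0 < n) :
    ((n % 3 = 1 ∨ n % 3 = 2) → padicValNat 2 (Nat.fib n) = 0) ∧
    (n % 6 = 3 → padicValNat 2 (Nat.fib n) = 1) ∧
    (n % 12 = 6 → padicValNat 2 (Nat.fib n) = 3) ∧
    (n % 12 = 0 → padicValNat 2 (Nat.fib n) = padicValNat 2 n + 2) := by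
  refine ⟨fun h => ?_, fun h => ?_, fun h => ?_,
    fun h => padicValNat_two_fib_of_six_dvd (by omega) hn⟩
  · have := fib_mod_two_of_mod_three_ne_zero (by omega : n % 3 ≠ 0)
    exact padicValNat.eq_zero_of_not_dvd (by omega)
  · have := fib_mod_four_of_mod_six_eq_three h
    exact padicValNat_eq_of_dvd_of_not_dvd (by norm_num) (by omega) (by omega)
  · rw [padicValNat_two_fib_of_six_dvd (by omega) hn,
      padicValNat_eq_of_dvd_of_not_dvd (p := 2) (k := 1) (by norm_num) (by omega) (by omega)]
end

section
/- Let p be a prime distinct from 2 and 5, z(p) its Fibonacci entry point, and e(p) = v_p(F_{z(p)}). Then for every positive integer n: if z(p) divides n then v_p(F_n) = v_p(n) + e(p), and otherwise v_p(F_n) = 0. -/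
open Nat Finset

/-- The Fibonacci matrix over a semiring. -/
def fibMat (R : Type*) [Semiring R] : Matrix (Fin 2) (Fin 2) R := !![1,1;1,0]

lemma fibMat_sq (R : Type*) [Semiring R] : fibMat R ^ 2 = fibMat R + 1 := by
  ext i j
  fin_cases i <;> fin_cases j <;>
    simp [fibMat, pow_two, Matrix.mul_apply, Fin.sum_univ_succ, Matrix.one_apply]

lemma fibMat_pow (R : Type*) [Semiring R] (n : ℕ) :
    fibMat R ^ (n+1) = (Nat.fib (n+1) : R) • fibMat R + (Nat.fib n : R) • 1 := by
  induction n with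
  | zero => simp
  | succ n ih =>
    rw [pow_succ, ih, add_mul, smul_mul_assoc, smul_mul_assoc, one_mul, ← pow_two,
      fibMat_sq, Nat.fib_add_two]
    push_cast
    rw [smul_add, add_smul]
    abel

lemma fibMat_pow_apply (R : Type*) [Semiring R] (n : ℕ) :
    (fibMat R ^ n) 0 1 = (Nat.fib n : R) := by
  cases n with
  | zero => simp [Matrix.one_apply]
  | succ n =>
    rw [fibMat_pow]
    simp [fibMat, Matrix.one_apply]

lemma exists_entry (p : ℕ) (hp : p.Prime) (hp2 : p ≠ 2) (hp5 : p ≠ 5) :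
    ∃ m, 0 < m ∧ p ∣ Nat.fib m ∧ ¬ p ∣ m := by
  haveI : Fact p.Prime := ⟨hp⟩
  have hp3 : 3 ≤ p := by have := hp.two_le; omega
  have hodd : p % 2 = 1 := Nat.odd_iff.mp (hp.odd_of_ne_two hp2)
  set A : Matrix (Fin 2) (Fin 2) (ZMod p) := fibMat (ZMod p) with hA
  set B : Matrix (Fin 2) (Fin 2) (ZMod p) := !![1,2;2,-1] with hBdef
  have hB : B = (2 : ZMod p) • A + (-1 : Matrix (Fin 2) (Fin 2) (ZMod p)) := by
    ext i j
    fin_cases i <;> fin_cases j <;>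
      simp [hA, hBdef, fibMat, Matrix.one_apply] <;> ring
  have hB2 : B ^ 2 = (5 : ZMod p) • 1 := by
    ext i j
    fin_cases i <;> fin_cases j <;>
      simp [hBdef, pow_two, Matrix.mul_apply, Fin.sum_univ_succ, Matrix.one_apply] <;> ring
  have h5 : (5 : ZMod p) ≠ 0 := by
    intro h
    have : ((5:ℕ) : ZMod p) = 0 := by exact_mod_cast h
    have h5d : p ∣ 5 := (ZMod.natCast_eq_zero_iff 5 p).mp this
    exact hp5 ((Nat.prime_dvd_prime_iff_eq hp (by norm_num)).mp h5d)
  set s : ZMod p := (5 : ZMod p) ^ (p / 2) with hs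
  have hs2 : s ^ 2 = 1 := by
    rw [hs, ← pow_mul, show p / 2 * 2 = p - 1 by omega]
    exact ZMod.pow_card_sub_one_eq_one h5
  have key : B ^ p = s • B := by
    rw [congrArg (B ^ ·) (show p = 2 * (p / 2) + 1 by omega)]
    rw [pow_succ, pow_mul, hB2, smul_pow, one_pow, smul_mul_assoc, one_mul]
  have key2 : B ^ p = (2 : ZMod p) • A ^ p + (-1 : Matrix (Fin 2) (Fin 2) (ZMod p)) := by
    rw [hB, add_pow_char_of_commute p ((Commute.one_right _).neg_right), smul_pow,
      ZMod.pow_card, Odd.neg_one_pow (hp.odd_of_ne_two hp2)]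
  obtain ⟨q, hq⟩ : ∃ q, p = q + 1 := ⟨p - 1, by omega⟩
  have hAp : A ^ p = (Nat.fib (q+1) : ZMod p) • A + (Nat.fib q : ZMod p) • 1 := by
    rw [congrArg (A ^ ·) hq]; exact fibMat_pow _ q
  rw [key2, hAp, hB] at key
  have e01 := congrFun (congrFun key 0) 1
  have e11 := congrFun (congrFun key 1) 1
  simp [hA, fibMat, Matrix.one_apply] at e01 e11
  set fp : ZMod p := (Nat.fib (q+1) : ZMod p)
  set fq : ZMod p := (Nat.fib q : ZMod p)
  have h2 : (2 : ZMod p) ≠ 0 := by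
    intro h
    have h' : ((2:ℕ) : ZMod p) = 0 := by exact_mod_cast h
    exact hp2 ((Nat.prime_dvd_prime_iff_eq hp Nat.prime_two).mp
      ((ZMod.natCast_eq_zero_iff 2 p).mp h'))
  have hfp : fp = s := mul_left_cancel₀ h2 (by rw [e01]; ring)
  have hcase : s = 1 ∨ s = -1 := by
    have h0 : (s - 1) * (s + 1) = 0 := by linear_combination hs2
    rcases mul_eq_zero.mp h0 with h | h
    · exact Or.inl (sub_eq_zero.mp h)
    · exact Or.inr (eq_neg_of_add_eq_zero_left h)
  rcases hcase with hs1 | hs1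
  · refine ⟨q, by omega, ?_, ?_⟩
    · have hfq : fq = 0 := by
        rw [hs1] at e11
        exact mul_left_cancel₀ h2 (by rw [mul_zero]; linear_combination e11)
      exact (ZMod.natCast_eq_zero_iff _ p).mp hfq
    · intro hd
      have := Nat.le_of_dvd (by omega) hd
      omega
  · refine ⟨p + 1, by omega, ?_, ?_⟩
    · have hfq : fq = 1 := by
        rw [hs1] at e11
        exact mul_left_cancel₀ h2 (by linear_combination e11)
      have hcast : ((Nat.fib (q+2) : ℕ) : ZMod p) = fq + fp := by
        rw [Nat.fib_add_two]; push_cast; rfl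
      have : ((Nat.fib (q+2) : ℕ) : ZMod p) = 0 := by
        rw [hcast, hfq, hfp, hs1]; ring
      have := (ZMod.natCast_eq_zero_iff _ p).mp this
      rwa [show q + 2 = p + 1 by omega] at this
    · intro hd
      have h1 : p ∣ 1 := (Nat.dvd_add_right (dvd_refl p)).mp hd
      have := Nat.le_of_dvd one_pos h1
      omega

lemma fib_mul_eq_sum (k m : ℕ) :
    Nat.fib ((k+1)*m) =
      ∑ j ∈ range (m+1), m.choose j * (Nat.fib (k+1)^j * Nat.fib k^(m-j)) * Nat.fib j := by
  have hc : Commute ((Nat.fib (k+1) : ℕ) • fibMat ℕ)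
      ((Nat.fib k : ℕ) • (1 : Matrix (Fin 2) (Fin 2) ℕ)) :=
    ((Commute.one_right _).smul_left _).smul_right _
  have h1 : fibMat ℕ ^ ((k+1)*m) =
      ∑ j ∈ range (m+1), ((Nat.fib (k+1) : ℕ) • fibMat ℕ)^j *
        ((Nat.fib k : ℕ) • (1 : Matrix (Fin 2) (Fin 2) ℕ))^(m-j) *
        (m.choose j : Matrix (Fin 2) (Fin 2) ℕ) := by
    rw [pow_mul, fibMat_pow]
    simp only [Nat.cast_id]
    rw [hc.add_pow]
  have h2 : ∀ j, ((Nat.fib (k+1) : ℕ) • fibMat ℕ)^j *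
        ((Nat.fib k : ℕ) • (1 : Matrix (Fin 2) (Fin 2) ℕ))^(m-j) *
        (m.choose j : Matrix (Fin 2) (Fin 2) ℕ)
      = (m.choose j * (Nat.fib (k+1)^j * Nat.fib k^(m-j))) • fibMat ℕ ^ j := by
    intro j
    rw [show ((m.choose j : ℕ) : Matrix (Fin 2) (Fin 2) ℕ) = (m.choose j) • 1 from by
      rw [nsmul_eq_mul, mul_one],
      smul_pow, smul_pow, one_pow, smul_mul_smul_comm, mul_one, smul_mul_smul_comm, mul_one]
    congr 1
    ring
  simp only [h2] at h1
  have h3 := congrFun (congrFun h1 0) 1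
  rw [fibMat_pow_apply, Nat.cast_id, Matrix.sum_apply] at h3
  simp only [Matrix.smul_apply, fibMat_pow_apply, Nat.cast_id, smul_eq_mul] at h3
  exact h3

lemma aux_pow3 (v : ℕ) (hv : 1 ≤ v) : v + 2 ≤ 3 ^ v := by
  induction v with
  | zero => omega
  | succ v ih =>
    rcases Nat.eq_or_lt_of_le hv with h | h
    · simp [← h]
    · have h3 : 1 ≤ 3 ^ v := Nat.one_le_pow _ _ (by norm_num)
      have := ih (by omega)
      calc v + 1 + 2 ≤ 3 ^ v + 1 := by omega
        _ ≤ 3 ^ (v+1) := by rw [pow_succ]; omega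

lemma fib_lte (p z m : ℕ) (hp : p.Prime) (hp2 : p ≠ 2) (hz : 0 < z)
    (hdvd : p ∣ Nat.fib z) (hm : 0 < m) :
    (Nat.fib (z*m)).factorization p = m.factorization p + (Nat.fib z).factorization p := by
  have hp3 : 3 ≤ p := by
    have := hp.two_le
    rcases Nat.lt_or_ge p 3 with h | h
    · interval_cases p <;> simp_all
    · exact h
  obtain ⟨k, rfl⟩ : ∃ k, z = k + 1 := ⟨z - 1, by omega⟩
  have hk : k ≠ 0 := by
    rintro rfl
    simp [Nat.fib_one, Nat.dvd_one] at hdvd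
    exact hp.one_lt.ne' hdvd
  have hfz0 : Nat.fib (k+1) ≠ 0 := (Nat.fib_pos.mpr (by omega)).ne'
  have hfk0 : Nat.fib k ≠ 0 := (Nat.fib_pos.mpr (by omega)).ne'
  have hfk : ¬ p ∣ Nat.fib k := by
    intro h
    have hcop : Nat.Coprime (Nat.fib k) (Nat.fib (k+1)) := Nat.fib_coprime_fib_succ k
    have : p ∣ Nat.gcd (Nat.fib k) (Nat.fib (k+1)) := Nat.dvd_gcd h hdvd
    rw [hcop] at this
    exact hp.one_lt.ne' (Nat.dvd_one.mp this)
  set a := (Nat.fib (k+1)).factorization p with ha_def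
  have ha : 1 ≤ a := (hp.pow_dvd_iff_le_factorization hfz0).mp (by simpa using hdvd)
  obtain ⟨m', rfl⟩ : ∃ m', m = m' + 1 := ⟨m - 1, by omega⟩
  set b := (m'+1).factorization p with hb_def
  set f : ℕ → ℕ := fun j => (m'+1).choose j *
    (Nat.fib (k+1)^j * Nat.fib k^(m'+1-j)) * Nat.fib j with hf_def
  have hsum : Nat.fib ((k+1)*(m'+1)) = f 1 + ∑ i ∈ range m', f (i+2) := by
    rw [fib_mul_eq_sum k (m'+1)]
    rw [Finset.sum_range_succ' (fun j => f j) (m'+1), Finset.sum_range_succ' (fun j => f (j+1)) m']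
    have hf0 : f 0 = 0 := by simp [hf_def]
    simp only [hf0, add_zero]
    ring
  have hT1 : (f 1).factorization p = b + a := by
    have : f 1 = (m'+1) * (Nat.fib (k+1) * Nat.fib k ^ m') := by
      simp only [hf_def, Nat.choose_one_right, Nat.fib_one, pow_one, Nat.add_sub_cancel]
      ring
    rw [this, Nat.factorization_mul (by omega) (by positivity),
      Nat.factorization_mul hfz0 (by positivity), Nat.factorization_pow]
    simp [Nat.factorization_eq_zero_of_not_dvd hfk, ← ha_def, ← hb_def]
  have hT10 : f 1 ≠ 0 := by
    have : f 1 = (m'+1) * (Nat.fib (k+1) * Nat.fib k ^ m') := by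
      simp only [hf_def, Nat.choose_one_right, Nat.fib_one, pow_one, Nat.add_sub_cancel]
      ring
    rw [this]; positivity
  have hR : p ^ (b + a + 1) ∣ ∑ i ∈ range m', f (i+2) := by
    apply Finset.dvd_sum
    intro i hi
    have hi' : i < m' := Finset.mem_range.mp hi
    set j := i + 2 with hj_def
    set c := ((m'+1).choose j).factorization p with hc_def
    set vj := j.factorization p with hvj_def
    have hCne : (m'+1).choose j ≠ 0 := (Nat.choose_pos (by omega)).ne'
    have h1 : b ≤ c + vj := by
      have hid : (m'+1) * m'.choose (i+1) = (m'+1).choose j * j :=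
        Nat.add_one_mul_choose_eq m' (i+1)
      have hCne' : m'.choose (i+1) ≠ 0 := (Nat.choose_pos (by omega)).ne'
      have heq : b + (m'.choose (i+1)).factorization p = c + vj := by
        rw [hb_def, hc_def, hvj_def, ← Finsupp.add_apply, ← Finsupp.add_apply,
          ← Nat.factorization_mul (by omega) hCne', ← Nat.factorization_mul hCne (by omega), hid]
      omega
    have h2 : vj + 2 ≤ j := by
      rcases Nat.eq_zero_or_pos vj with h | h
      · omega
      · have hdj : p ^ vj ∣ j := Nat.ordProj_dvd j p
        have hle : p ^ vj ≤ j := Nat.le_of_dvd (by omega) hdj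
        have h3v : 3 ^ vj ≤ p ^ vj := Nat.pow_le_pow_left hp3 vj
        have := aux_pow3 vj h
        omega
    have hbound : b + a + 1 ≤ c + j * a := by
      have hja : vj + a + 1 ≤ j * a := by
        have e1 : (vj + 2) * a ≤ j * a := Nat.mul_le_mul_right a h2
        have e2 : vj * 1 ≤ vj * a := Nat.mul_le_mul_left vj ha
        nlinarith
      omega
    have hd1 : p ^ c ∣ (m'+1).choose j := Nat.ordProj_dvd _ p
    have hd2 : p ^ (j * a) ∣ Nat.fib (k+1) ^ j := by
      rw [mul_comm j a, pow_mul]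
      exact pow_dvd_pow_of_dvd (Nat.ordProj_dvd _ p) j
    have hd3 : (m'+1).choose j * Nat.fib (k+1) ^ j ∣ f j :=
      ⟨Nat.fib k ^ (m'+1-j) * Nat.fib j, by rw [hf_def]; ring⟩
    calc p ^ (b + a + 1) ∣ p ^ (c + j * a) := pow_dvd_pow p hbound
      _ ∣ (m'+1).choose j * Nat.fib (k+1) ^ j := by rw [pow_add]; exact mul_dvd_mul hd1 hd2
      _ ∣ f j := hd3
  have hS0 : Nat.fib ((k+1)*(m'+1)) ≠ 0 := (Nat.fib_pos.mpr (by positivity)).ne'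
  have hdvdS : p ^ (b + a) ∣ Nat.fib ((k+1)*(m'+1)) := by
    rw [hsum]
    exact dvd_add (by rw [← hT1]; exact Nat.ordProj_dvd _ p)
      ((pow_dvd_pow p (by omega)).trans hR)
  have hnot : ¬ p ^ (b + a + 1) ∣ Nat.fib ((k+1)*(m'+1)) := by
    intro h
    rw [hsum] at h
    have hT : p ^ (b + a + 1) ∣ f 1 := by
      have h2 := Nat.dvd_sub h hR
      rwa [Nat.add_sub_cancel] at h2
    have := (hp.pow_dvd_iff_le_factorization hT10).mp hT
    omega
  have hle1 : b + a ≤ (Nat.fib ((k+1)*(m'+1))).factorization p :=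
    (hp.pow_dvd_iff_le_factorization hS0).mp hdvdS
  have hle2 : (Nat.fib ((k+1)*(m'+1))).factorization p ≤ b + a := by
    by_contra hcon
    exact hnot ((hp.pow_dvd_iff_le_factorization hS0).mpr (by omega))
  omega

theorem padicValNat_fib_of_prime (p : ℕ) (hp : p.Prime) (hp2 : p ≠ 2) (hp5 : p ≠ 5)
    (n : ℕ) (hn : 0 < n) :
    (fibEntry p ∣ n →
      padicValNat p (Nat.fib n) = padicValNat p n + padicValNat p (Nat.fib (fibEntry p))) ∧
    (¬ fibEntry p ∣ n → padicValNat p (Nat.fib n) = 0) := by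
  obtain ⟨m, hm0, hmf, hmp⟩ := exists_entry p hp hp2 hp5
  have hne : {t : ℕ | 0 < t ∧ p ∣ Nat.fib t}.Nonempty := ⟨m, hm0, hmf⟩
  have hzmem : 0 < fibEntry p ∧ p ∣ Nat.fib (fibEntry p) := Nat.sInf_mem hne
  set z := fibEntry p with hz_def
  have hiff : ∀ t, p ∣ Nat.fib t ↔ z ∣ t := by
    intro t
    constructor
    · intro ht
      rcases Nat.eq_zero_or_pos t with rfl | ht0
      · exact dvd_zero z
      have hg : p ∣ Nat.fib (Nat.gcd z t) := by
        rw [Nat.fib_gcd]; exact Nat.dvd_gcd hzmem.2 ht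
      have hg0 : 0 < Nat.gcd z t := Nat.gcd_pos_of_pos_right _ ht0
      have hle : z ≤ Nat.gcd z t := Nat.sInf_le ⟨hg0, hg⟩
      have hge : Nat.gcd z t ≤ z := Nat.le_of_dvd hzmem.1 (Nat.gcd_dvd_left z t)
      have hgz : Nat.gcd z t = z := le_antisymm hge hle
      rw [← hgz]
      exact Nat.gcd_dvd_right z t
    · intro ht
      exact dvd_trans hzmem.2 (Nat.fib_dvd z t ht)
  have hpz : ¬ p ∣ z := fun h => hmp (h.trans ((hiff m).mp hmf))
  constructor
  · intro hzn
    obtain ⟨c, rfl⟩ := hzn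
    have hc0 : 0 < c := by
      rcases Nat.eq_zero_or_pos c with rfl | h
      · simp at hn
      · exact h
    rw [← Nat.factorization_def _ hp, ← Nat.factorization_def _ hp, ← Nat.factorization_def _ hp,
      fib_lte p z c hp hp2 hzmem.1 hzmem.2 hc0,
      Nat.factorization_mul (by omega) (by omega)]
    simp [Nat.factorization_eq_zero_of_not_dvd hpz]
  · intro hzn
    exact padicValNat.eq_zero_of_not_dvd (fun h => hzn ((hiff n).mp h))
end

section
/- If k is a positive integer divisible by 8, then there is no positive integer n with n = k · z(n), where z is the Fibonacci entry point. -/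
/-! The 2-adic valuation of Fibonacci numbers is `v₂(F_m) = v₂(m) + 2` whenever `6 ∣ m`,
and `8 ∣ F_m` forces `6 ∣ m` (the entry point of 8 is 6). Hence `v₂(F_m) < v₂(8m)` for every
`m > 0`, so `8m ∤ F_m`; but `n = k z(n)` with `8 ∣ k` would give `8 z(n) ∣ n ∣ F_{z(n)}`. -/

open Nat

theorem dvd_fib_fibEntry (n : ℕ) : n ∣ fib (fibEntry n) := by
  rcases Set.eq_empty_or_nonempty {m | 0 < m ∧ n ∣ fib m} with h | h
  · simp [fibEntry, h]
  · exact (Nat.sInf_mem h).2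

theorem fibEntry_dvd_of_dvd_fib {n m : ℕ} (h : n ∣ fib m) : fibEntry n ∣ m := by
  rcases m.eq_zero_or_pos with rfl | hm
  · exact dvd_zero _
  have hne : {m | 0 < m ∧ n ∣ fib m}.Nonempty := ⟨m, hm, h⟩
  obtain ⟨he, hdvd⟩ : 0 < fibEntry n ∧ n ∣ fib (fibEntry n) := Nat.sInf_mem hne
  have hgcd : n ∣ fib (m.gcd (fibEntry n)) := by
    rw [fib_gcd]
    exact Nat.dvd_gcd h hdvd
  have hle : fibEntry n ≤ m.gcd (fibEntry n) :=
    Nat.sInf_le ⟨Nat.gcd_pos_of_pos_left _ hm, hgcd⟩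
  rw [← Nat.gcd_eq_right_iff_dvd]
  exact le_antisymm (Nat.le_of_dvd he (Nat.gcd_dvd_right _ _)) hle

theorem fibEntry_eq_of_minimal {n e : ℕ} (he : 0 < e) (hdvd : n ∣ fib e)
    (hmin : ∀ d < e, 0 < d → ¬ n ∣ fib d) : fibEntry n = e :=
  le_antisymm (Nat.sInf_le ⟨he, hdvd⟩) <|
    le_csInf ⟨e, he, hdvd⟩ fun d ⟨hd, hnd⟩ => not_lt.mp fun hlt => hmin d hlt hd hnd

theorem fibEntry_eight : fibEntry 8 = 6 :=
  fibEntry_eq_of_minimal (by norm_num) (by decide) (by decide)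

theorem fibEntry_sixteen : fibEntry 16 = 12 :=
  fibEntry_eq_of_minimal (by norm_num) (by decide) (by decide)

theorem odd_fib_succ_of_three_dvd {n : ℕ} (h : 3 ∣ n) : Odd (fib (n + 1)) := by
  have h2 : 2 ∣ fib n := fib_dvd 3 n h
  rw [← Nat.not_even_iff_odd, even_iff_two_dvd]
  intro h2'
  have := Nat.eq_one_of_dvd_one ((fib_coprime_fib_succ n) ▸ Nat.dvd_gcd h2 h2')
  omega

theorem padicValNat_two_fib_two_mul_s11 {n : ℕ} (hn : 0 < n) (h6 : 6 ∣ n) :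
    padicValNat 2 (fib (2 * n)) = padicValNat 2 (fib n) + 1 := by
  -- `F_{2n} = F_n L_n`, and the Lucas number `L_n = 2 F_{n+1} - F_n` is twice an odd number
  -- because `8 ∣ F_n` and `F_{n+1}` is odd.
  obtain ⟨b, hb⟩ : 8 ∣ fib n := fib_dvd 6 n h6
  obtain ⟨c, hc⟩ := odd_fib_succ_of_three_dvd (dvd_trans (by norm_num) h6)
  have hle := fib_le_fib_succ (n := n)
  obtain ⟨w, hw, hlucas⟩ : ∃ w, Odd w ∧ 2 * fib (n + 1) - fib n = 2 * w :=
    ⟨2 * c + 1 - 4 * b, ⟨c - 2 * b, by omega⟩, by omega⟩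
  rw [fib_two_mul, hlucas, padicValNat.mul (fib_pos.mpr hn).ne' (by omega),
    padicValNat.mul two_ne_zero hw.pos.ne', padicValNat_self,
    padicValNat.eq_zero_of_not_dvd hw.not_two_dvd_nat]

theorem padicValNat_two_fib_six_mul_of_odd {u : ℕ} (hu : Odd u) :
    padicValNat 2 (fib (6 * u)) = 3 := by
  have hne : fib (6 * u) ≠ 0 := (fib_pos.mpr (by linarith [hu.pos])).ne'
  have h8 : 2 ^ 3 ∣ fib (6 * u) := fib_dvd 6 _ (dvd_mul_right 6 u)
  have h16 : ¬ 2 ^ 4 ∣ fib (6 * u) := fun h => by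
    have h12 := fibEntry_sixteen ▸ fibEntry_dvd_of_dvd_fib h
    obtain ⟨k, rfl⟩ := hu
    omega
  rw [padicValNat_dvd_iff_le hne] at h8 h16
  omega

theorem padicValNat_two_fib_six_mul {s : ℕ} (hs : 0 < s) :
    padicValNat 2 (fib (6 * s)) = padicValNat 2 s + 3 := by
  induction s using Nat.strong_induction_on with
  | _ s ih =>
  rcases Nat.even_or_odd s with ⟨t, rfl⟩ | hodd
  · have ht : 0 < t := by omega
    rw [show 6 * (t + t) = 2 * (6 * t) by ring, ← two_mul,
      padicValNat_two_fib_two_mul_s11 (by omega) (dvd_mul_right 6 t), ih t (by omega) ht,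
      padicValNat.mul two_ne_zero ht.ne', padicValNat_self]
    ring
  · rw [padicValNat_two_fib_six_mul_of_odd hodd,
      padicValNat.eq_zero_of_not_dvd hodd.not_two_dvd_nat]

theorem not_eight_mul_self_dvd_fib {m : ℕ} (hm : 0 < m) : ¬ 8 * m ∣ fib m := by
  intro h
  obtain ⟨s, rfl⟩ : 6 ∣ m :=
    fibEntry_eight ▸ fibEntry_dvd_of_dvd_fib (dvd_of_mul_right_dvd h)
  have hpow : 2 ^ (padicValNat 2 s + 4) ∣ fib (6 * s) :=
    calc 2 ^ (padicValNat 2 s + 4) = 2 ^ 4 * 2 ^ padicValNat 2 s := by ring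
      _ ∣ 48 * s := mul_dvd_mul (by norm_num) pow_padicValNat_dvd
      _ = 8 * (6 * s) := by ring
      _ ∣ fib (6 * s) := h
  rw [padicValNat_dvd_iff_le (fib_pos.mpr hm).ne', padicValNat_two_fib_six_mul (by omega)]
    at hpow
  omega

theorem no_self_fib_divisor_of_eight_dvd_general (k : ℕ) (h8 : 8 ∣ k) :
    ¬ ∃ n : ℕ, 0 < n ∧ n = k * fibEntry n := by
  rintro ⟨n, hn, hnk⟩
  obtain ⟨j, rfl⟩ := h8
  have hz : 0 < fibEntry n := Nat.pos_of_ne_zero fun h0 => by rw [h0, mul_zero] at hnk; omega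
  refine not_eight_mul_self_dvd_fib hz ?_
  calc 8 * fibEntry n ∣ 8 * j * fibEntry n := mul_dvd_mul_right (dvd_mul_right 8 j) _
    _ = n := hnk.symm
    _ ∣ fib (fibEntry n) := dvd_fib_fibEntry n

theorem no_self_fib_divisor_of_eight_dvd (k : ℕ) (hk : 0 < k) (h8 : 8 ∣ k) :
    ¬ ∃ n : ℕ, 0 < n ∧ n = k * fibEntry n :=
  no_self_fib_divisor_of_eight_dvd_general k h8
end

section
/- If k is a positive integer divisible by 5, then there is no positive integer n with n = k · z(n), where z is the Fibonacci entry point. -/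
lemma fib_cassini (n : ℕ) :
    (Nat.fib (n + 1) : ℤ) ^ 2
      = Nat.fib n * Nat.fib (n + 1) + (Nat.fib n : ℤ) ^ 2 + (-1) ^ n := by
  induction n with
  | zero => simp
  | succ n ih =>
    have h : (Nat.fib (n + 2) : ℤ) = Nat.fib n + Nat.fib (n + 1) := by
      rw [Nat.fib_add_two]; push_cast; ring
    rw [h, pow_succ]
    linear_combination -ih

/-- Key identity: `F_{5n} = 5 F_n (5 F_n^4 + 5 (-1)^n F_n^2 + 1)` in `ℤ`. -/
lemma fib_five_mul (n : ℕ) :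
    (Nat.fib (5 * n) : ℤ) =
      5 * Nat.fib n * (5 * (Nat.fib n : ℤ) ^ 4 + 5 * (-1) ^ n * (Nat.fib n : ℤ) ^ 2 + 1) := by
  rcases Nat.eq_zero_or_pos n with rfl | hn
  · simp
  obtain ⟨m, rfl⟩ := Nat.exists_eq_add_of_le hn
  set n := 1 + m with hndef
  set a : ℤ := (Nat.fib n : ℤ) with ha
  set b : ℤ := (Nat.fib (n + 1) : ℤ) with hb
  set e : ℤ := (-1) ^ n with he
  have hfm : (Nat.fib m : ℤ) = b - a := by
    have : Nat.fib (m + 2) = Nat.fib m + Nat.fib (m + 1) := Nat.fib_add_two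
    have h1 : n + 1 = m + 2 := by omega
    have h2 : n = m + 1 := by omega
    rw [hb, ha, h1, h2, this]
    push_cast; ring
  have cast2 : ∀ d : ℕ, (Nat.fib (2 * d) : ℤ) =
      Nat.fib d * (2 * Nat.fib (d + 1) - Nat.fib d) := by
    intro d
    have h := Nat.fib_two_mul d
    have hle : Nat.fib d ≤ 2 * Nat.fib (d + 1) :=
      le_trans (Nat.fib_le_fib_succ) (by omega)
    rw [h]
    push_cast [Nat.cast_sub hle]
    ring
  have hA : (Nat.fib (2 * n) : ℤ) = a * (2 * b - a) := by
    rw [cast2 n, ha, hb]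
  have hB : (Nat.fib (2 * n + 1) : ℤ) = b ^ 2 + a ^ 2 := by
    rw [Nat.fib_two_mul_add_one]; push_cast [ha, hb]; ring
  have h4 : (Nat.fib (4 * n) : ℤ)
      = (a * (2 * b - a)) * (2 * (b ^ 2 + a ^ 2) - a * (2 * b - a)) := by
    have h44 : 4 * n = 2 * (2 * n) := by ring
    rw [h44, cast2 (2 * n), hA, hB]
  have h41 : (Nat.fib (4 * n + 1) : ℤ)
      = (b ^ 2 + a ^ 2) ^ 2 + (a * (2 * b - a)) ^ 2 := by
    have h44 : 4 * n + 1 = 2 * (2 * n) + 1 := by ring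
    rw [h44, Nat.fib_two_mul_add_one]
    push_cast
    rw [hA, hB]
  have h5 : 5 * n = 4 * n + m + 1 := by omega
  have hadd := Nat.fib_add (4 * n) m
  have h5n : (Nat.fib (5 * n) : ℤ)
      = (a * (2 * b - a)) * (2 * (b ^ 2 + a ^ 2) - a * (2 * b - a)) * (b - a)
        + ((b ^ 2 + a ^ 2) ^ 2 + (a * (2 * b - a)) ^ 2) * a := by
    rw [h5, hadd]
    push_cast
    rw [h4, h41, hfm]
    have hmn : m + 1 = n := by omega
    rw [hmn, ← ha]
  have hcas : b ^ 2 = a * b + a ^ 2 + e := by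
    rw [ha, hb, he]; exact fib_cassini n
  have hee : e ^ 2 = 1 := by
    rw [he, ← pow_mul]
    have : n * 2 = 2 * n := by ring
    rw [mul_comm n 2, pow_mul]
    norm_num
  rw [h5n]
  linear_combination (5*a*e + 5*a*b^2 - 5*a^2*b + 20*a^3) * hcas + (5*a) * hee

lemma five_dvd_of_five_dvd_fib {m : ℕ} (h : 5 ∣ Nat.fib m) : 5 ∣ m := by
  have hg := Nat.fib_gcd m 5
  have h5 : Nat.fib 5 = 5 := by decide
  rw [h5, Nat.gcd_eq_right h] at hg
  have hd : Nat.gcd m 5 ∣ 5 := Nat.gcd_dvd_right m 5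
  rcases Nat.Prime.eq_one_or_self_of_dvd (by norm_num) _ hd with h1 | h1
  · rw [h1] at hg; simp [Nat.fib_one] at hg
  · rw [← h1]; exact Nat.gcd_dvd_left m 5

lemma pow_five_dvd_of_dvd_fib : ∀ j m : ℕ, 0 < m → 5 ^ j ∣ Nat.fib m → 5 ^ j ∣ m := by
  intro j
  induction j with
  | zero => intro m _ _; simp
  | succ j ih =>
    intro m hm h
    have h5 : 5 ∣ Nat.fib m := dvd_trans (dvd_pow_self 5 (Nat.succ_ne_zero j)) h
    obtain ⟨n, rfl⟩ := five_dvd_of_five_dvd_fib h5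
    have hn : 0 < n := by omega
    set a : ℤ := (Nat.fib n : ℤ) with ha
    set e : ℤ := (-1) ^ n with he
    set c : ℤ := 5 * a ^ 4 + 5 * e * a ^ 2 + 1 with hc
    have hid : (Nat.fib (5 * n) : ℤ) = 5 * (a * c) := by
      rw [fib_five_mul n, ← ha, ← he, ← hc]; ring
    have hdz : (5 : ℤ) ^ (j + 1) ∣ (Nat.fib (5 * n) : ℤ) := by
      exact_mod_cast Int.natCast_dvd_natCast.mpr h
    rw [hid] at hdz
    have hdz2 : (5 : ℤ) ^ j ∣ a * c := by
      have h2 : (5 : ℤ) * 5 ^ j ∣ 5 * (a * c) := by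
        rw [← pow_succ']; exact hdz
      exact (mul_dvd_mul_iff_left (by norm_num : (5 : ℤ) ≠ 0)).mp h2
    have hcop : IsCoprime ((5 : ℤ) ^ j) c :=
      IsCoprime.pow_left ⟨-(a ^ 4 + e * a ^ 2), 1, by rw [hc]; ring⟩
    have hda : (5 : ℤ) ^ j ∣ a := hcop.dvd_of_dvd_mul_right hdz2
    have hda' : (5 : ℤ) ^ j ∣ (Nat.fib n : ℤ) := by rw [← ha]; exact hda
    have hdn : 5 ^ j ∣ Nat.fib n := by exact_mod_cast hda'
    have := ih n hn hdn
    calc 5 ^ (j + 1) = 5 * 5 ^ j := by rw [pow_succ']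
    _ ∣ 5 * n := mul_dvd_mul_left 5 this

theorem no_self_fib_divisor_of_five_dvd (k : ℕ) (hk : 0 < k) (h5 : 5 ∣ k) :
    ¬ ∃ n : ℕ, 0 < n ∧ n = k * fibEntry n := by
  rintro ⟨n, hn, heq⟩
  set z := fibEntry n with hz
  have hzpos : 0 < z := by
    rcases Nat.eq_zero_or_pos z with h | h
    · rw [h, mul_zero] at heq; omega
    · exact h
  have hS : ({m | 0 < m ∧ n ∣ Nat.fib m} : Set ℕ).Nonempty := by
    by_contra h
    rw [Set.not_nonempty_iff_eq_empty] at h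
    have : z = 0 := by rw [hz, fibEntry, h, Nat.sInf_empty]
    omega
  have hmem : z ∈ {m | 0 < m ∧ n ∣ Nat.fib m} := Nat.sInf_mem hS
  obtain ⟨-, hdvd⟩ := hmem
  obtain ⟨k', rfl⟩ := h5
  set v := padicValNat 5 z with hv
  have h1 : 5 ^ (v + 1) ∣ n := by
    rw [heq, pow_succ']
    exact mul_dvd_mul ⟨k', rfl⟩ (pow_padicValNat_dvd)
  have h2 : 5 ^ (v + 1) ∣ Nat.fib z := dvd_trans h1 hdvd
  have h3 : 5 ^ (v + 1) ∣ z := pow_five_dvd_of_dvd_fib (v + 1) z hzpos h2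
  haveI : Fact (Nat.Prime 5) := ⟨by norm_num⟩
  exact pow_succ_padicValNat_not_dvd hzpos.ne' h3
end
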